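/- arXiv:1603.09013 — 2 statements merged into one kernel-verified Lean document; each statement's English description precedes it below -/
import Mathlib

section
/- Let 𝐢 = (i_1,…,i_N) be a reduced word for the reversal w₀ in S_{n+1} with induced root sequence β_1, …, β_N. Then for each position k: i_{k+2} = i_k and |i_k − i_{k+1}| = 1 (so that replacing (i_k, i_{k+1}, i_k) by (i_{k+1}, i_k, i_{k+1}) is a 3-term braid move yielding another reduced word 𝐢′ for w₀) if and only if β_{k+1} = β_k + β_{k+2}. Moreover, in this case the induced root sequence of 𝐢′ has β_{k+2}, β_{k+1}, β_k in positions k, k+1, k+2 respectively, all other terms being unchanged. -/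
open scoped Classical

noncomputable section

/-- Standard basis vector `e i` (1-based coordinates, ambient `ℤ^(n+1)` sits inside `ℕ → ℤ`). -/
def stdE (i : ℕ) : ℕ → ℤ := fun j => if j = i then 1 else 0

/-- Type `A_n` simple root `α_i = e_i - e_(i+1)`. -/
def alphaA (i : ℕ) : ℕ → ℤ := stdE i - stdE (i+1)

/-- Positive root `α_(i,j) = α_i + ⋯ + α_j = e_i - e_(j+1)`. -/
def rootA (i j : ℕ) : ℕ → ℤ := stdE i - stdE (j+1)

/-- `β` is a positive root of type `A_n`. -/
def PosRootA (n : ℕ) (β : ℕ → ℤ) : Prop :=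
  ∃ i j, 1 ≤ i ∧ i ≤ j ∧ j ≤ n ∧ β = rootA i j

/-- Simple transposition `s_i = (i, i+1)`. -/
def sA (i : ℕ) : Equiv.Perm ℕ := Equiv.swap i (i+1)

/-- Product `s_(i₁) ⋯ s_(i_N)` of the simple transpositions of a word. -/
def wordProdA (w : List ℕ) : Equiv.Perm ℕ := (w.map sA).prod

/-- The reversal permutation `w₀ : k ↦ n+2-k` of `{1,…,n+1}`. -/
def w0A (n : ℕ) : Equiv.Perm ℕ :=
  Function.Involutive.toPerm (fun k => if 1 ≤ k ∧ k ≤ n+1 then n+2-k else k)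
    (by intro k; dsimp only; split_ifs <;> omega)

/-- A permutation of coordinate indices acts on vectors by permuting coordinates. -/
def permAct (σ : Equiv.Perm ℕ) (v : ℕ → ℤ) : ℕ → ℤ := fun j => v (σ⁻¹ j)

/-- The induced root sequence `β_k = s_(i₁)⋯s_(i_(k-1)) (α_(i_k))` of a word (0-indexed). -/
def rootSeqA (w : List ℕ) : List (ℕ → ℤ) :=
  (List.range w.length).map fun k => permAct (wordProdA (w.take k)) (alphaA (w.getD k 0))

/-- The word `𝐢^A = (1,2,…,n)(1,2,…,n-1)⋯(1,2)(1)`. -/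
def wordA (n : ℕ) : List ℕ :=
  ((List.range n).reverse).flatMap fun m => (List.range (m+1)).map (· + 1)

/-- `w` is a reduced word for the longest element `w₀` of `S_(n+1)`. -/
def isReducedWordA (n : ℕ) (w : List ℕ) : Prop :=
  (∀ i ∈ w, 1 ≤ i ∧ i ≤ n) ∧ w.length = n * (n+1) / 2 ∧ wordProdA w = w0A n

/-- Standard inner product on `ℤ^(n+1)` (coordinates `1,…,n+1`; index `0` unused). -/
def ipA (n : ℕ) (v u : ℕ → ℤ) : ℤ := ∑ j ∈ Finset.range (n+2), v j * u j

/-!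
Write the word as `t ++ [a, b, c] ++ d` with `t` of length `k`, and let `P` be the product of
`t`. The roots in positions `k, k+1, k+2` are `P α_a, P s_a α_b, P s_a s_b α_c`, so cancelling
`P` and then `s_a` turns `β_(k+1) = β_k + β_(k+2)` into `s_b α_c = α_a + α_b`; reading this at
the coordinates `b` and `b+1` forces `c = a` and `|a - b| = 1`. For adjacent `a, b` the braid
relation `s_a s_b s_a = s_b s_a s_b` leaves the product, hence every root outside the three
positions, unchanged, while inside them `(α_a, α_a + α_b, α_b)` (transported by `P`) is reversed.
-/

namespace List

variable {α : Type*} {l m : List α} {k : ℕ} {x y z d : α}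

theorem exists_eq_append_triple (h : k + 2 < l.length) :
    ∃ t x y z m, t.length = k ∧ l = t ++ [x, y, z] ++ m := by
  refine ⟨l.take k, l[k], l[k + 1], l[k + 2], l.drop (k + 3), by simp; omega, ?_⟩
  conv_lhs => rw [← List.take_append_drop k l, List.drop_eq_getElem_cons (by omega),
    List.drop_eq_getElem_cons (by omega), List.drop_eq_getElem_cons h]
  simp

theorem getD_append_triple_first (h : l.length = k) : (l ++ [x, y, z] ++ m).getD k d = x := by
  subst h; simp

theorem getD_append_triple_second (h : l.length = k) :
    (l ++ [x, y, z] ++ m).getD (k + 1) d = y := by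
  subst h; simp

theorem getD_append_triple_third (h : l.length = k) :
    (l ++ [x, y, z] ++ m).getD (k + 2) d = z := by
  subst h; simp

theorem set_append_triple_first (h : l.length = k) :
    (l ++ [x, y, z] ++ m).set k d = l ++ [d, y, z] ++ m := by
  subst h; simp

theorem set_append_triple_second (h : l.length = k) :
    (l ++ [x, y, z] ++ m).set (k + 1) d = l ++ [x, d, z] ++ m := by
  subst h; simp

theorem set_append_triple_third (h : l.length = k) :
    (l ++ [x, y, z] ++ m).set (k + 2) d = l ++ [x, y, d] ++ m := by
  subst h; simp

end List

theorem permAct_one (v : ℕ → ℤ) : permAct 1 v = v := rfl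

theorem permAct_mul (σ τ : Equiv.Perm ℕ) (v : ℕ → ℤ) :
    permAct (σ * τ) v = permAct σ (permAct τ v) := rfl

theorem permAct_add (σ : Equiv.Perm ℕ) (u v : ℕ → ℤ) :
    permAct σ (u + v) = permAct σ u + permAct σ v := rfl

theorem permAct_injective (σ : Equiv.Perm ℕ) : Function.Injective (permAct σ) := by
  intro u v h
  funext j
  simpa [permAct] using congrFun h (σ j)

theorem permAct_sA_sA (i : ℕ) (v : ℕ → ℤ) : permAct (sA i) (permAct (sA i) v) = v := by
  funext x
  simp [permAct, sA]

theorem wordProdA_cons (a : ℕ) (l : List ℕ) : wordProdA (a :: l) = sA a * wordProdA l := by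
  simp [wordProdA]

theorem wordProdA_append (l₁ l₂ : List ℕ) :
    wordProdA (l₁ ++ l₂) = wordProdA l₁ * wordProdA l₂ := by
  simp [wordProdA]

theorem wordProdA_triple (a b c : ℕ) : wordProdA [a, b, c] = sA a * sA b * sA c := by
  simp [wordProdA, mul_assoc]

theorem permAct_sA_alphaA_self (i : ℕ) : permAct (sA i) (alphaA i) = -alphaA i := by
  funext x
  simp only [permAct, sA, alphaA, stdE, Equiv.swap_inv, Equiv.swap_apply_def, Pi.sub_apply,
    Pi.neg_apply]
  split_ifs <;> omega

theorem permAct_sA_alphaA_of_adj {i j : ℕ} (h : i + 1 = j ∨ j + 1 = i) :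
    permAct (sA i) (alphaA j) = alphaA i + alphaA j := by
  funext x
  simp only [permAct, sA, alphaA, stdE, Equiv.swap_inv, Equiv.swap_apply_def, Pi.sub_apply,
    Pi.add_apply]
  split_ifs <;> omega

theorem permAct_sA_sA_alphaA_of_adj {a b : ℕ} (h : a + 1 = b ∨ b + 1 = a) :
    permAct (sA a) (permAct (sA b) (alphaA a)) = alphaA b := by
  rw [permAct_sA_alphaA_of_adj (Or.symm h), permAct_add, permAct_sA_alphaA_self,
    permAct_sA_alphaA_of_adj h]
  abel

theorem permAct_sA_alphaA_eq_add_iff (a b c : ℕ) :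
    permAct (sA b) (alphaA c) = alphaA a + alphaA b ↔ c = a ∧ (a + 1 = b ∨ b + 1 = a) := by
  constructor
  · intro h
    have h₁ := congrFun h b
    have h₂ := congrFun h (b + 1)
    simp only [permAct, sA, Equiv.swap_inv, Equiv.swap_apply_left, Equiv.swap_apply_right,
      alphaA, stdE, Pi.add_apply, Pi.sub_apply] at h₁ h₂
    split_ifs at h₁ h₂ <;> omega
  · rintro ⟨rfl, h⟩
    rw [permAct_sA_alphaA_of_adj (Or.symm h), add_comm]

theorem sA_mul_sA_mul_sA (i j : ℕ) : sA i * sA j * sA i = Equiv.swap (sA i j) (sA i (j + 1)) := by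
  rw [sA, sA, Equiv.swap_apply_apply, Equiv.swap_inv]

theorem sA_braid {a b : ℕ} (h : a + 1 = b ∨ b + 1 = a) :
    sA a * sA b * sA a = sA b * sA a * sA b := by
  rw [sA_mul_sA_mul_sA, sA_mul_sA_mul_sA]
  rcases h with rfl | rfl <;> simp (disch := omega) [sA, Equiv.swap_apply_of_ne_of_ne]

theorem rootSeqA_length (l : List ℕ) : (rootSeqA l).length = l.length := by
  simp [rootSeqA]

theorem rootSeqA_cons (a : ℕ) (l : List ℕ) :
    rootSeqA (a :: l) = alphaA a :: (rootSeqA l).map (permAct (sA a)) := by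
  simp [rootSeqA, List.range_succ_eq_map, permAct_mul, wordProdA, permAct_one]

theorem rootSeqA_append (l₁ l₂ : List ℕ) :
    rootSeqA (l₁ ++ l₂) = rootSeqA l₁ ++ (rootSeqA l₂).map (permAct (wordProdA l₁)) := by
  induction l₁ with
  | nil => simp [rootSeqA, wordProdA, permAct_one]
  | cons a l ih =>
    simp [rootSeqA_cons, ih, wordProdA_cons, permAct_mul, Function.comp_def]

theorem rootSeqA_triple (a b c : ℕ) :
    rootSeqA [a, b, c] =
      [alphaA a, permAct (sA a) (alphaA b), permAct (sA a) (permAct (sA b) (alphaA c))] := by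
  simp only [rootSeqA_cons, List.map_cons]
  rfl

theorem rootSeqA_append_triple (t d : List ℕ) (a b c : ℕ) :
    rootSeqA (t ++ [a, b, c] ++ d) =
      rootSeqA t ++
        [permAct (wordProdA t) (alphaA a),
          permAct (wordProdA t) (permAct (sA a) (alphaA b)),
          permAct (wordProdA t) (permAct (sA a) (permAct (sA b) (alphaA c)))] ++
        (rootSeqA d).map (permAct (wordProdA t * (sA a * sA b * sA c))) := by
  rw [rootSeqA_append, rootSeqA_append, rootSeqA_triple, wordProdA_append, wordProdA_triple]
  rfl

theorem permAct_sA_alphaA_eq_add_permAct_iff (a b c : ℕ) :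
    permAct (sA a) (alphaA b) = alphaA a + permAct (sA a) (permAct (sA b) (alphaA c)) ↔
      c = a ∧ (a + 1 = b ∨ b + 1 = a) := by
  rw [← permAct_sA_alphaA_eq_add_iff, ← (permAct_injective (sA a)).eq_iff, permAct_sA_sA,
    permAct_add, permAct_sA_sA, permAct_sA_alphaA_self, eq_neg_add_iff_add_eq, eq_comm]

theorem isReducedWordA_braid {n a b : ℕ} {t d : List ℕ} (h : a + 1 = b ∨ b + 1 = a)
    (hw : isReducedWordA n (t ++ [a, b, a] ++ d)) : isReducedWordA n (t ++ [b, a, b] ++ d) := by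
  obtain ⟨hletters, hlength, hprod⟩ := hw
  refine ⟨fun i hi => hletters i ?_, by simpa using hlength, ?_⟩
  · simp only [List.mem_append, List.mem_cons, List.not_mem_nil] at hi ⊢
    tauto
  · rw [wordProdA_append, wordProdA_append, wordProdA_triple, ← sA_braid h, ← wordProdA_triple,
      ← wordProdA_append, ← wordProdA_append, hprod]

theorem statement4_general (n : ℕ) (w : List ℕ) (hw : isReducedWordA n w)
    (k : ℕ) (hk : k + 2 < w.length) :
    ((w.getD (k+2) 0 = w.getD k 0 ∧
        (w.getD k 0 + 1 = w.getD (k+1) 0 ∨ w.getD (k+1) 0 + 1 = w.getD k 0)) ↔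
      (rootSeqA w).getD (k+1) 0 = (rootSeqA w).getD k 0 + (rootSeqA w).getD (k+2) 0) ∧
    ((w.getD (k+2) 0 = w.getD k 0 ∧
        (w.getD k 0 + 1 = w.getD (k+1) 0 ∨ w.getD (k+1) 0 + 1 = w.getD k 0)) →
      isReducedWordA n
        (((w.set k (w.getD (k+1) 0)).set (k+1) (w.getD k 0)).set (k+2) (w.getD (k+1) 0)) ∧
      rootSeqA
          (((w.set k (w.getD (k+1) 0)).set (k+1) (w.getD k 0)).set (k+2) (w.getD (k+1) 0)) =
        ((rootSeqA w).set k ((rootSeqA w).getD (k+2) 0)).set (k+2) ((rootSeqA w).getD k 0)) := by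
  obtain ⟨t, a, b, c, d, ht, rfl⟩ := List.exists_eq_append_triple hk
  have hR : (rootSeqA t).length = k := by rw [rootSeqA_length, ht]
  simp only [rootSeqA_append_triple t d a b c,
    List.getD_append_triple_first ht, List.getD_append_triple_second ht,
    List.getD_append_triple_third ht, List.set_append_triple_first ht,
    List.set_append_triple_second ht, List.set_append_triple_third ht,
    List.getD_append_triple_first hR, List.getD_append_triple_second hR,
    List.getD_append_triple_third hR, List.set_append_triple_first hR,
    List.set_append_triple_third hR]
  refine ⟨by rw [← permAct_add, (permAct_injective _).eq_iff,
    permAct_sA_alphaA_eq_add_permAct_iff], ?_⟩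
  rintro ⟨rfl, hab⟩
  refine ⟨isReducedWordA_braid hab hw, ?_⟩
  rw [rootSeqA_append_triple, permAct_sA_sA_alphaA_of_adj hab,
    permAct_sA_sA_alphaA_of_adj hab.symm, permAct_sA_alphaA_of_adj hab,
    permAct_sA_alphaA_of_adj hab.symm, add_comm (alphaA b), sA_braid hab]

/-- For a reduced word `𝐢` for `w₀` with induced root sequence `β`, positions
`k, k+1, k+2` carry letters `(a, b, a)` with `|a - b| = 1` (a 3-term braid move applies) iff
`β_(k+1) = β_k + β_(k+2)`; in that case the braided word `(b, a, b)` is again a reduced word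
for `w₀`, and its induced root sequence has `β_(k+2), β_(k+1), β_k` in positions
`k, k+1, k+2`, all other terms unchanged. -/
theorem statement4 (n : ℕ) (hn : 1 ≤ n) (w : List ℕ) (hw : isReducedWordA n w)
    (k : ℕ) (hk : k + 2 < w.length) :
    ((w.getD (k+2) 0 = w.getD k 0 ∧
        (w.getD k 0 + 1 = w.getD (k+1) 0 ∨ w.getD (k+1) 0 + 1 = w.getD k 0)) ↔
      (rootSeqA w).getD (k+1) 0 = (rootSeqA w).getD k 0 + (rootSeqA w).getD (k+2) 0) ∧
    ((w.getD (k+2) 0 = w.getD k 0 ∧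
        (w.getD k 0 + 1 = w.getD (k+1) 0 ∨ w.getD (k+1) 0 + 1 = w.getD k 0)) →
      isReducedWordA n
        (((w.set k (w.getD (k+1) 0)).set (k+1) (w.getD k 0)).set (k+2) (w.getD (k+1) 0)) ∧
      rootSeqA
          (((w.set k (w.getD (k+1) 0)).set (k+1) (w.getD k 0)).set (k+2) (w.getD (k+1) 0)) =
        ((rootSeqA w).set k ((rootSeqA w).getD (k+2) 0)).set (k+2) ((rootSeqA w).getD k 0)) :=
  statement4_general n w hw k hk

end
end

section
/- The induced order on the positive roots of type D_n determined by 𝐢^D (via β_k = s_{i_1}⋯s_{i_{k−1}}(α_{i_k})) is the concatenation, over i = 1, …, n−2, of the blocks: β_{i,i} ≺ β_{i,i+1} ≺ ⋯ ≺ β_{i,n−2} ≺ β_{i,n−1} ≺ γ_{i,n} ≺ γ_{i,n−1} ≺ ⋯ ≺ γ_{i,i+1} if i is odd, and β_{i,i} ≺ β_{i,i+1} ≺ ⋯ ≺ β_{i,n−2} ≺ γ_{i,n} ≺ β_{i,n−1} ≺ γ_{i,n−1} ≺ ⋯ ≺ γ_{i,i+1} if i is even, followed by the final block β_{n−1,n−1}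 ≺ γ_{n−1,n} if n is even, and γ_{n−1,n} ≺ β_{n−1,n−1} if n is odd. -/
open scoped Classical

noncomputable section

/-- Type `D_n` simple roots: `α_i = e_i - e_(i+1)` for `1 ≤ i ≤ n-1`, `α_n = e_(n-1) + e_n`. -/
def alphaD (n i : ℕ) : ℕ → ℤ := if i = n then stdE (n-1) + stdE n else stdE i - stdE (i+1)

/-- Positive root `β_(i,k) = α_i + ⋯ + α_k = e_i - e_(k+1)` (for `1 ≤ i ≤ k ≤ n-1`). -/
def betaD (i k : ℕ) : ℕ → ℤ := stdE i - stdE (k+1)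

/-- Positive root `γ_(i,k) = α_i + ⋯ + α_(n-2) + α_n + α_(n-1) + ⋯ + α_k = e_i + e_k`
(for `1 ≤ i < k ≤ n`). -/
def gammaD (i k : ℕ) : ℕ → ℤ := stdE i + stdE k

/-- `β` is a positive root of type `D_n`. -/
def PosRootD (n : ℕ) (β : ℕ → ℤ) : Prop :=
  (∃ i k, 1 ≤ i ∧ i ≤ k ∧ k ≤ n-1 ∧ β = betaD i k) ∨
  (∃ i k, 1 ≤ i ∧ i < k ∧ k ≤ n ∧ β = gammaD i k)

/-- The simple reflection `s_i` of `W(D_n)` acting on `ℤ^n`: for `i ≤ n-1` it swaps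
coordinates `i` and `i+1`; `s_n` swaps coordinates `n-1` and `n` and negates both. -/
def sDap (n i : ℕ) (v : ℕ → ℤ) : ℕ → ℤ :=
  if i = n then fun j => if j = n-1 then -(v n) else if j = n then -(v (n-1)) else v j
  else fun j => if j = i then v (i+1) else if j = i+1 then v i else v j

/-- The action of the product `s_(i₁) ⋯ s_(i_N)` on a vector. -/
def actD (n : ℕ) (w : List ℕ) (v : ℕ → ℤ) : ℕ → ℤ := w.foldr (sDap n) v

/-- The induced root sequence `β_k = s_(i₁)⋯s_(i_(k-1)) (α_(i_k))` of a word (0-indexed). -/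
def rootSeqD (n : ℕ) (w : List ℕ) : List (ℕ → ℤ) :=
  (List.range w.length).map fun k => actD n (w.take k) (alphaD n (w.getD k 0))

/-- The block `(i, i+1, …, n-1, n, n-2, n-3, …, i)` of the word `𝐢^D`. -/
def blockD (n i : ℕ) : List ℕ :=
  ((List.range (n-i)).map (· + i)) ++ [n] ++ (((List.range (n-1-i)).map (· + i)).reverse)

/-- The word `𝐢^D`: the blocks `(i, i+1, …, n-1, n, n-2, …, i)` for `i = 1, …, n-2`,
followed by `(n-1, n)`. -/
def wordD (n : ℕ) : List ℕ :=
  ((List.range (n-2)).flatMap fun i' => blockD n (i'+1)) ++ [n-1, n]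

/-- Standard inner product on `ℤ^n` (coordinates `1,…,n`; index `0` unused). -/
def ipD (n : ℕ) (v u : ℕ → ℤ) : ℤ := ∑ j ∈ Finset.range (n+1), v j * u j

/-- The block of the induced order of `𝐢^D` contributed by the block of `𝐢^D` starting
with the letter `i` (`1 ≤ i ≤ n-2`): for odd `i` it is
`β_(i,i), …, β_(i,n-1), γ_(i,n), γ_(i,n-1), …, γ_(i,i+1)`, and for even `i` it is
`β_(i,i), …, β_(i,n-2), γ_(i,n), β_(i,n-1), γ_(i,n-1), …, γ_(i,i+1)`. -/
def blockRootsD (n i : ℕ) : List (ℕ → ℤ) :=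
  if i % 2 = 1 then
    ((List.range (n-i)).map fun d => betaD i (i+d)) ++
    ((List.range (n-i)).map fun d => gammaD i (n-d))
  else
    ((List.range (n-1-i)).map fun d => betaD i (i+d)) ++
    [gammaD i n, betaD i (n-1)] ++
    ((List.range (n-1-i)).map fun d => gammaD i (n-1-d))

/-- The claimed induced order on the positive roots of type `D_n` determined by `𝐢^D`:
the blocks above for `i = 1, …, n-2`, followed by `β_(n-1,n-1), γ_(n-1,n)` if `n` is even
and `γ_(n-1,n), β_(n-1,n-1)` if `n` is odd. -/
def orderD (n : ℕ) : List (ℕ → ℤ) :=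
  ((List.range (n-2)).flatMap fun i' => blockRootsD n (i'+1)) ++
  (if n % 2 = 0 then [betaD (n-1) (n-1), gammaD (n-1) n]
   else [gammaD (n-1) n, betaD (n-1) (n-1)])

lemma actD_nil (n : ℕ) (v : ℕ → ℤ) : actD n [] v = v := rfl
lemma actD_cons (n a : ℕ) (w : List ℕ) (v : ℕ → ℤ) : actD n (a :: w) v = sDap n a (actD n w v) := rfl
lemma actD_append (n : ℕ) (u w : List ℕ) (v : ℕ → ℤ) :
    actD n (u ++ w) v = actD n u (actD n w v) := by
  simp [actD, List.foldr_append]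

lemma rootSeqD_nil (n : ℕ) : rootSeqD n [] = [] := rfl

lemma rootSeqD_cons (n a : ℕ) (w : List ℕ) :
    rootSeqD n (a :: w) = alphaD n a :: (rootSeqD n w).map (sDap n a) := by
  simp only [rootSeqD, List.length_cons, List.range_succ_eq_map, List.map_cons, List.map_map]
  congr 1

lemma rootSeqD_append (n : ℕ) (u w : List ℕ) :
    rootSeqD n (u ++ w) = rootSeqD n u ++ (rootSeqD n w).map (actD n u) := by
  induction u with
  | nil =>
    simp only [List.nil_append, rootSeqD_nil, List.nil_append]
    rw [List.map_congr_left (fun x _ => actD_nil n x)]; exact (List.map_id' _).symm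
  | cons a u ih =>
    simp only [List.cons_append, rootSeqD_cons, ih, List.map_append, List.map_map]
    simp [Function.comp, actD_cons]

lemma blockD_base (n : ℕ) (hn : 2 ≤ n) : blockD n (n-1) = [n-1, n] := by
  have h1 : n - (n-1) = 1 := by omega
  have h2 : n - 1 - (n-1) = 0 := by omega
  simp [blockD, h1, h2, List.range_succ]

lemma blockD_succ (n i : ℕ) (h1 : 1 ≤ i) (h2 : i ≤ n-2) :
    blockD n i = (i :: blockD n (i+1)) ++ [i] := by
  have e1 : n - i = (n - (i+1)) + 1 := by omega
  have e2 : n - 1 - i = (n - 1 - (i+1)) + 1 := by omega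
  rw [blockD, blockD, e1, e2, List.range_succ_eq_map, List.range_succ_eq_map]
  simp only [List.map_cons, List.map_map, List.reverse_cons, Nat.zero_add]
  have hc : ∀ m : ℕ, (List.range m).map ((· + i) ∘ Nat.succ) = (List.range m).map (· + (i+1)) := by
    intro m; exact List.map_congr_left (fun x _ => by simp [Function.comp]; omega)
  rw [hc, hc]
  simp [List.append_assoc]

lemma sDap_apply_ne (n i : ℕ) (hin : i ≠ n) (v : ℕ → ℤ) (j : ℕ) :
    sDap n i v j = if j = i then v (i+1) else if j = i+1 then v i else v j := by
  simp [sDap, hin]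

lemma sDap_apply_n (n : ℕ) (v : ℕ → ℤ) (j : ℕ) :
    sDap n n v j = if j = n-1 then -(v n) else if j = n then -(v (n-1)) else v j := by
  simp [sDap]

lemma actD_blockD_aux (n : ℕ) (hn : 4 ≤ n) :
    ∀ d i, 1 ≤ i → i = n-1-d →
      ∀ v, actD n (blockD n i) v = fun j => if j = i ∨ j = n then -v j else v j := by
  intro d
  induction d with
  | zero =>
    intro i hi hieq v
    have hie : i = n-1 := by omega
    subst hie
    rw [blockD_base n (by omega)]
    have h1 : (n-1 : ℕ) ≠ n := by omega
    funext j
    show sDap n (n-1) (sDap n n v) j = _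
    rw [sDap_apply_ne n (n-1) h1]
    simp only [sDap_apply_n]
    have h2 : (n-1) + 1 = n := by omega
    rw [h2]
    split_ifs <;>
      first
        | rfl | omega
        | (congr 1 <;> omega)
        | (congr 1 <;> congr 1 <;> omega)
  | succ d ih =>
    intro i hi hieq v
    have h2 : i ≤ n - 2 := by omega
    rw [blockD_succ n i hi h2, actD_append, actD_cons]
    have hact : actD n [i] v = sDap n i v := rfl
    rw [hact, ih (i+1) (by omega) (by omega)]
    have hin : i ≠ n := by omega
    funext j
    rw [sDap_apply_ne n i hin]
    beta_reduce
    simp only [sDap_apply_ne n i hin]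
    split_ifs <;>
      first
        | rfl | omega
        | (congr 1 <;> omega)
        | (congr 1 <;> congr 1 <;> omega)
        | simp_all

lemma actD_blockD (n i : ℕ) (hn : 4 ≤ n) (h1 : 1 ≤ i) (h2 : i ≤ n-1) (v : ℕ → ℤ) :
    actD n (blockD n i) v = fun j => if j = i ∨ j = n then -v j else v j :=
  actD_blockD_aux n hn (n-1-i) i h1 (by omega) v

lemma alphaD_eq_betaD (n i : ℕ) (h : i ≠ n) : alphaD n i = betaD i i := by
  simp [alphaD, betaD, h]

lemma sDap_betaD (n i k : ℕ) (hin : i ≠ n) (hk : i + 1 ≤ k) :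
    sDap n i (betaD (i+1) k) = betaD i k := by
  funext j
  rw [sDap_apply_ne n i hin]
  simp only [betaD, stdE, Pi.sub_apply]
  split_ifs <;> omega

lemma sDap_gammaD (n i k : ℕ) (hin : i ≠ n) (hk : i + 2 ≤ k) :
    sDap n i (gammaD (i+1) k) = gammaD i k := by
  funext j
  rw [sDap_apply_ne n i hin]
  simp only [gammaD, stdE, Pi.add_apply]
  split_ifs <;> omega

def rawB (n i : ℕ) : List (ℕ → ℤ) :=
  ((List.range (n-i)).map fun d => betaD i (i+d)) ++
  ((List.range (n-i)).map fun d => gammaD i (n-d))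

lemma rawB_reshuffle (n i : ℕ) (h1 : 1 ≤ i) (h2 : i ≤ n-2) (hn : 4 ≤ n) :
    rawB n i = betaD i i :: ((rawB n (i+1)).map (sDap n i) ++ [gammaD i (i+1)]) := by
  have e1 : n - i = (n - (i+1)) + 1 := by omega
  have hB : (List.range (n-i)).map (fun d => betaD i (i+d)) =
      betaD i i :: ((List.range (n-(i+1))).map fun d => betaD (i+1) ((i+1)+d)).map (sDap n i) := by
    rw [e1, List.range_succ_eq_map]
    simp only [List.map_cons, List.map_map, Nat.add_zero]
    congr 1
    refine List.map_congr_left (fun d _ => ?_)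
    show betaD i (i + Nat.succ d) = sDap n i (betaD (i+1) ((i+1)+d))
    rw [sDap_betaD n i ((i+1)+d) (by omega) (by omega)]
    have : i + Nat.succ d = i + 1 + d := by omega
    rw [this]
  have hG : (List.range (n-i)).map (fun d => gammaD i (n-d)) =
      ((List.range (n-(i+1))).map fun d => gammaD (i+1) (n-d)).map (sDap n i)
        ++ [gammaD i (i+1)] := by
    rw [e1, List.range_succ]
    simp only [List.map_append, List.map_map, List.map_cons, List.map_nil]
    congr 1
    · refine List.map_congr_left (fun d hd => ?_)
      simp only [List.mem_range] at hd
      show gammaD i (n-d) = sDap n i (gammaD (i+1) (n-d))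
      rw [sDap_gammaD n i (n-d) (by omega) (by omega)]
    · have : n - (n - (i+1)) = i + 1 := by omega
      rw [this]
  rw [rawB, rawB, hB, hG]
  simp [List.map_append, List.append_assoc]

lemma rootSeqD_blockD_aux (n : ℕ) (hn : 4 ≤ n) :
    ∀ d i, 1 ≤ i → i = n-1-d → rootSeqD n (blockD n i) = rawB n i := by
  intro d
  induction d with
  | zero =>
    intro i hi hieq
    have hie : i = n-1 := by omega
    subst hie
    rw [blockD_base n (by omega)]
    have e1 : n - (n-1) = 1 := by omega
    rw [rootSeqD_cons, rootSeqD_cons, rootSeqD_nil]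
    simp only [List.map_nil, List.map_cons]
    rw [rawB, e1]
    simp only [List.range_succ, List.range_zero, List.nil_append, List.map_cons, List.map_nil,
      Nat.add_zero, Nat.sub_zero, List.singleton_append]
    congr 1
    · rw [alphaD_eq_betaD n (n-1) (by omega)]
    · congr 1
      funext j
      have h1 : (n-1 : ℕ) ≠ n := by omega
      rw [sDap_apply_ne n (n-1) h1]
      have h2 : (n-1) + 1 = n := by omega
      rw [h2]
      simp only [alphaD, gammaD, if_true, eq_self_iff_true, Pi.add_apply]
      simp only [stdE]
      split_ifs <;> omega
  | succ d ih =>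
    intro i hi hieq
    have h2 : i ≤ n - 2 := by omega
    have hin : i ≠ n := by omega
    rw [blockD_succ n i hi h2, rootSeqD_append, rootSeqD_cons,
      ih (i+1) (by omega) (by omega)]
    have hone : rootSeqD n [i] = [alphaD n i] := by
      rw [rootSeqD_cons, rootSeqD_nil]; rfl
    rw [hone]
    rw [rawB_reshuffle n i hi h2 hn]
    simp only [List.map_cons, List.map_nil, List.cons_append, List.nil_append]
    congr 1
    · exact alphaD_eq_betaD n i hin
    · rw [actD_cons, actD_blockD n (i+1) hn (by omega) (by omega)]
      refine congrArg (fun X => List.map (sDap n i) (rawB n (i+1)) ++ [X]) ?_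
      funext j
      rw [sDap_apply_ne n i hin]
      simp only [alphaD, if_neg hin, gammaD, stdE, Pi.sub_apply, Pi.add_apply]
      split_ifs <;> first | omega | (exfalso; tauto)

lemma rootSeqD_blockD (n i : ℕ) (hn : 4 ≤ n) (h1 : 1 ≤ i) (h2 : i ≤ n-1) :
    rootSeqD n (blockD n i) = rawB n i :=
  rootSeqD_blockD_aux n hn (n-1-i) i h1 (by omega)

def QD (n m : ℕ) (v : ℕ → ℤ) : ℕ → ℤ :=
  fun j => if (1 ≤ j ∧ j ≤ m) ∨ (j = n ∧ m % 2 = 1) then -v j else v j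

def prefD (n m : ℕ) : List ℕ := (List.range m).flatMap fun i' => blockD n (i'+1)

lemma prefD_succ (n m : ℕ) : prefD n (m+1) = prefD n m ++ blockD n (m+1) := by
  simp [prefD, List.range_succ]

lemma actD_prefD (n : ℕ) (hn : 4 ≤ n) :
    ∀ m, m ≤ n-2 → ∀ v, actD n (prefD n m) v = QD n m v := by
  intro m
  induction m with
  | zero =>
    intro _ v
    funext j
    simp only [prefD, List.range_zero, List.flatMap_nil, actD_nil, QD]
    have h : ¬((1 ≤ j ∧ j ≤ 0) ∨ (j = n ∧ 0 % 2 = 1)) := by omega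
    rw [if_neg h]
  | succ m ih =>
    intro hm v
    rw [prefD_succ, actD_append, actD_blockD n (m+1) hn (by omega) (by omega),
      ih (by omega)]
    funext j
    simp only [QD]
    split_ifs <;> first | rfl | omega | (exfalso; tauto)

lemma QD_betaD (n m i k : ℕ) (hn : 4 ≤ n) (hmi : m < i) (hik : i ≤ k)
    (hkn : k + 1 ≤ n) (h : k + 1 ≠ n ∨ m % 2 = 0) :
    QD n m (betaD i k) = betaD i k := by
  funext j
  simp only [QD, betaD, stdE, Pi.sub_apply]
  split_ifs <;> omega

lemma QD_gammaD (n m i k : ℕ) (hn : 4 ≤ n) (hmi : m < i) (hik : i < k)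
    (hkn : k ≤ n) (h : k ≠ n ∨ m % 2 = 0) :
    QD n m (gammaD i k) = gammaD i k := by
  funext j
  simp only [QD, gammaD, stdE, Pi.add_apply]
  split_ifs <;> omega

lemma QD_betaD_flip (n m i : ℕ) (hn : 4 ≤ n) (hm : m % 2 = 1) (hmi : m < i)
    (hi : i ≤ n-1) :
    QD n m (betaD i (n-1)) = gammaD i n := by
  funext j
  simp only [QD, betaD, gammaD, stdE, Pi.sub_apply, Pi.add_apply]
  split_ifs <;> omega

lemma QD_gammaD_flip (n m i : ℕ) (hn : 4 ≤ n) (hm : m % 2 = 1) (hmi : m < i)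
    (hi : i ≤ n-1) :
    QD n m (gammaD i n) = betaD i (n-1) := by
  funext j
  simp only [QD, betaD, gammaD, stdE, Pi.sub_apply, Pi.add_apply]
  split_ifs <;> omega

lemma mapQ_rawB (n i : ℕ) (hn : 4 ≤ n) (h1 : 1 ≤ i) (h2 : i ≤ n-2) :
    (rawB n i).map (QD n (i-1)) = blockRootsD n i := by
  by_cases hodd : i % 2 = 1
  · rw [blockRootsD, if_pos hodd, rawB, List.map_append, List.map_map, List.map_map]
    congr 1
    · refine List.map_congr_left (fun d hd => ?_)
      simp only [List.mem_range] at hd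
      show QD n (i-1) (betaD i (i+d)) = betaD i (i+d)
      exact QD_betaD n (i-1) i (i+d) hn (by omega) (by omega) (by omega) (Or.inr (by omega))
    · refine List.map_congr_left (fun d hd => ?_)
      simp only [List.mem_range] at hd
      show QD n (i-1) (gammaD i (n-d)) = gammaD i (n-d)
      exact QD_gammaD n (i-1) i (n-d) hn (by omega) (by omega) (by omega) (Or.inr (by omega))
  · have hm : (i-1) % 2 = 1 := by omega
    have e : n - i = (n-1-i) + 1 := by omega
    have eB : (List.range (n-i)).map (fun d => betaD i (i+d)) =
        ((List.range (n-1-i)).map fun d => betaD i (i+d)) ++ [betaD i (n-1)] := by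
      rw [e, List.range_succ]
      simp only [List.map_append, List.map_cons, List.map_nil]
      have e2 : i + (n-1-i) = n-1 := by omega
      rw [e2]
    have eG : (List.range (n-i)).map (fun d => gammaD i (n-d)) =
        gammaD i n :: ((List.range (n-1-i)).map fun d => gammaD i (n-1-d)) := by
      rw [e, List.range_succ_eq_map]
      simp only [List.map_cons, List.map_map, Nat.sub_zero]
      congr 1
      refine List.map_congr_left (fun d _ => ?_)
      show gammaD i (n - Nat.succ d) = gammaD i (n-1-d)
      have e3 : n - Nat.succ d = n-1-d := by omega
      rw [e3]
    rw [blockRootsD, if_neg hodd, rawB, eB, eG, List.map_append, List.map_append,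
      List.map_cons, List.map_cons, List.map_nil, List.map_map, List.map_map]
    have m1 : (List.range (n-1-i)).map (QD n (i-1) ∘ fun d => betaD i (i+d)) =
        (List.range (n-1-i)).map fun d => betaD i (i+d) := by
      refine List.map_congr_left (fun d hd => ?_)
      simp only [List.mem_range] at hd
      show QD n (i-1) (betaD i (i+d)) = betaD i (i+d)
      exact QD_betaD n (i-1) i (i+d) hn (by omega) (by omega) (by omega) (Or.inl (by omega))
    have m2 : (List.range (n-1-i)).map (QD n (i-1) ∘ fun d => gammaD i (n-1-d)) =
        (List.range (n-1-i)).map fun d => gammaD i (n-1-d) := by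
      refine List.map_congr_left (fun d hd => ?_)
      simp only [List.mem_range] at hd
      show QD n (i-1) (gammaD i (n-1-d)) = gammaD i (n-1-d)
      exact QD_gammaD n (i-1) i (n-1-d) hn (by omega) (by omega) (by omega) (Or.inl (by omega))
    rw [m1, m2, QD_betaD_flip n (i-1) i hn hm (by omega) (by omega),
      QD_gammaD_flip n (i-1) i hn hm (by omega) (by omega)]
    simp [List.append_assoc]

lemma rootSeqD_prefD (n : ℕ) (hn : 4 ≤ n) :
    ∀ m, m ≤ n-2 →
      rootSeqD n (prefD n m) = (List.range m).flatMap fun i' => blockRootsD n (i'+1) := by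
  intro m
  induction m with
  | zero => intro _; simp [prefD, rootSeqD_nil]
  | succ m ih =>
    intro hm
    rw [prefD_succ, rootSeqD_append, ih (by omega),
      rootSeqD_blockD n (m+1) hn (by omega) (by omega)]
    have hmap : (rawB n (m+1)).map (actD n (prefD n m)) = (rawB n (m+1)).map (QD n m) := by
      refine List.map_congr_left (fun x _ => ?_)
      rw [actD_prefD n hn m (by omega)]
    have hq : (rawB n (m+1)).map (QD n m) = blockRootsD n (m+1) := by
      have := mapQ_rawB n (m+1) hn (by omega) (by omega)
      simpa using this
    rw [hmap, hq, List.range_succ, List.flatMap_append]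
    simp

/-- The induced order on the positive roots of type `D_n` determined by
`𝐢^D` is the explicit concatenation `orderD`. -/
theorem statement14 (n : ℕ) (hn : 4 ≤ n) :
    rootSeqD n (wordD n) = orderD n := by
  have hw : wordD n = prefD n (n-2) ++ [n-1, n] := rfl
  rw [hw, rootSeqD_append, rootSeqD_prefD n hn (n-2) le_rfl]
  have hb : ([n-1, n] : List ℕ) = blockD n (n-1) := (blockD_base n (by omega)).symm
  rw [hb, rootSeqD_blockD n (n-1) hn (by omega) (by omega)]
  have hrb : rawB n (n-1) = [betaD (n-1) (n-1), gammaD (n-1) n] := by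
    rw [rawB]
    have e : n - (n-1) = 1 := by omega
    rw [e]
    simp [List.range_succ]
  rw [hrb]
  simp only [List.map_cons, List.map_nil, actD_prefD n hn (n-2) le_rfl]
  rw [orderD]
  congr 1
  by_cases h : n % 2 = 0
  · rw [if_pos h,
      QD_betaD n (n-2) (n-1) (n-1) hn (by omega) le_rfl (by omega) (Or.inr (by omega)),
      QD_gammaD n (n-2) (n-1) n hn (by omega) (by omega) le_rfl (Or.inr (by omega))]
  · rw [if_neg h,
      QD_betaD_flip n (n-2) (n-1) hn (by omega) (by omega) le_rfl,
      QD_gammaD_flip n (n-2) (n-1) hn (by omega) (by omega) le_rfl]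


end
end
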